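/- Let F : ℝ^n → ℝ^n be a C¹ map with fixed point x₀ = 0, and suppose all eigenvalues of the derivative A = DF(0) have absolute value strictly less than 1. Then 0 is exponentially stable: there exist a neighbourhood V of 0, constants γ > 0 and K ∈ (0,1), such that for every x ∈ V and every n ∈ ℕ, ‖F^[n](x)‖ ≤ γ K^n. -/

import Mathlib

open MeasureTheory Filter Metric Set Bornology

noncomputable def upMC {E : Type*} [PseudoMetricSpace E] [MeasurableSpace E]
    (mu : Measure E) (d s : ℝ) (A : Set E) : ℝ :=
  limsup (fun ε : ℝ => (mu (thickening ε A)).toReal / ε ^ (d - s)) (nhdsWithin 0 (Ioi 0))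

noncomputable def loMC {E : Type*} [PseudoMetricSpace E] [MeasurableSpace E]
    (mu : Measure E) (d s : ℝ) (A : Set E) : ℝ :=
  liminf (fun ε : ℝ => (mu (thickening ε A)).toReal / ε ^ (d - s)) (nhdsWithin 0 (Ioi 0))

/-- Upper box (Minkowski) dimension of `A`, in ambient dimension `d`. -/
noncomputable def upperBoxDim {E : Type*} [PseudoMetricSpace E] [MeasurableSpace E]
    (mu : Measure E) (d : ℝ) (A : Set E) : ℝ :=
  sInf {s : ℝ | 0 < s ∧ upMC mu d s A = 0}

/-- Lower box (Minkowski) dimension of `A`, in ambient dimension `d`. -/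
noncomputable def lowerBoxDim {E : Type*} [PseudoMetricSpace E] [MeasurableSpace E]
    (mu : Measure E) (d : ℝ) (A : Set E) : ℝ :=
  sInf {s : ℝ | 0 < s ∧ loMC mu d s A = 0}

/-- The spectrum (set of eigenvalues, in finite dimension) of the complexification
of a real linear endomorphism. -/
noncomputable def specC {E : Type*} [AddCommGroup E] [Module ℝ E] (f : E →ₗ[ℝ] E) : Set ℂ :=
  spectrum ℂ (LinearMap.baseChange ℂ f)

/-!
The eigenvalues of the complexification of `A = DF(0)` form the spectrum of the complexified
matrix of `A`, so by Gelfand's formula the powers of `A` tend to zero and `‖A ^ N‖ < 1` for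
some `N`. Hence `F^[N]` contracts a small ball around `0` by a factor `K ^ N < 1`, while on that
ball the iterates `F^[s]`, `s < N`, are bounded by `C ‖x‖` since they are differentiable at the
fixed point. Induction on `m` in steps of `N` gives `‖F^[m] x‖ ≤ C / K ^ N * K ^ m * ‖x‖`.
-/

open scoped Topology

theorem tendsto_pow_atTop_nhds_zero_of_forall_spectrum_norm_lt_one {𝔸 : Type*} [NormedRing 𝔸]
    [NormedAlgebra ℂ 𝔸] [CompleteSpace 𝔸] {a : 𝔸} (ha : ∀ z ∈ spectrum ℂ a, ‖z‖ < 1) :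
    Tendsto (a ^ ·) atTop (𝓝 0) := by
  cases subsingleton_or_nontrivial 𝔸
  · simpa only [Subsingleton.elim _ (0 : 𝔸)] using tendsto_const_nhds
  have hrad : spectralRadius ℂ a < (1 : NNReal) :=
    spectrum.spectralRadius_lt_of_forall_lt a fun z hz ↦ mod_cast ha z hz
  obtain ⟨ρ, hρa, hρ1⟩ := ENNReal.lt_iff_exists_nnreal_btwn.1 hrad
  have hbound : ∀ᶠ k : ℕ in atTop, ‖a ^ k‖ ≤ ρ ^ k := by
    filter_upwards [(spectrum.pow_nnnorm_pow_one_div_tendsto_nhds_spectralRadius a).eventually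
      (gt_mem_nhds hρa), eventually_ne_atTop 0] with k hk hk0
    have : (‖a ^ k‖₊ : ENNReal) < (ρ : ENNReal) ^ k := by
      simpa only [one_div, ENNReal.rpow_inv_natCast_pow hk0] using
        (ENNReal.pow_lt_pow_left_iff hk0).2 hk
    exact_mod_cast this.le
  exact squeeze_zero_norm' hbound
    (tendsto_pow_atTop_nhds_zero_of_lt_one ρ.2 (mod_cast hρ1))

theorem specC_eq_spectrum_toMatrix_map {V ι : Type*} [AddCommGroup V] [Module ℝ V] [Fintype ι]
    [DecidableEq ι] (b : Module.Basis ι ℝ V) (f : V →ₗ[ℝ] V) :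
    specC f = spectrum ℂ ((LinearMap.toMatrix b b f).map (algebraMap ℝ ℂ)) := by
  rw [specC, ← AlgEquiv.spectrum_eq (LinearMap.toMatrixAlgEquiv (Algebra.TensorProduct.basis ℂ b)),
    ← LinearMap.toMatrix_baseChange]
  rfl

theorem Matrix.tendsto_pow_atTop_nhds_zero_of_forall_spectrum_map_norm_lt_one {ι : Type*}
    [Fintype ι] [DecidableEq ι] {M : Matrix ι ι ℝ}
    (hM : ∀ z ∈ spectrum ℂ (M.map (algebraMap ℝ ℂ)), ‖z‖ < 1) :
    Tendsto (M ^ ·) atTop (𝓝 0) := by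
  -- any Banach algebra norm on complex matrices will do
  let := Matrix.linftyOpNormedRing (n := ι) (α := ℂ)
  let := Matrix.linftyOpNormedAlgebra (n := ι) (R := ℂ) (α := ℂ)
  have hre := ((continuous_id.matrix_map Complex.continuous_re).tendsto 0).comp
    (tendsto_pow_atTop_nhds_zero_of_forall_spectrum_norm_lt_one hM)
  convert hre using 1
  · ext k : 1
    simp only [Function.comp_apply, id, ← Matrix.map_pow, Matrix.map_map]
    ext
    simp
  · simp

theorem ContinuousLinearMap.tendsto_pow_atTop_nhds_zero_of_forall_specC_norm_lt_one
    {E : Type*} [NormedAddCommGroup E] [NormedSpace ℝ E] [FiniteDimensional ℝ E]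
    {A : E →L[ℝ] E} (hA : ∀ μ ∈ specC A.toLinearMap, ‖μ‖ < 1) :
    Tendsto (A ^ ·) atTop (𝓝 0) := by
  let b := Module.finBasis ℝ E
  let e : (E →L[ℝ] E) ≃L[ℝ] Matrix (Fin (Module.finrank ℝ E)) (Fin (Module.finrank ℝ E)) ℝ :=
    (LinearMap.toContinuousLinearMap.symm.trans (LinearMap.toMatrix b b)).toContinuousLinearEquiv
  have hM := Matrix.tendsto_pow_atTop_nhds_zero_of_forall_spectrum_map_norm_lt_one
    (M := LinearMap.toMatrix b b A.toLinearMap) (by rwa [← specC_eq_spectrum_toMatrix_map])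
  convert (e.symm.continuous.tendsto 0).comp hM using 1
  · ext k : 1
    rw [Function.comp_apply, e.eq_symm_apply]
    simp [e, ContinuousLinearMap.toLinearMap_pow, LinearMap.toMatrix_pow]
  · simp

theorem norm_iterate_le_of_norm_iterate_le_pow {E : Type*} [SeminormedAddCommGroup E]
    {f : E → E} {N : ℕ} {K C r : ℝ} (hN : 0 < N) (hK₀ : 0 < K) (hK₁ : K ≤ 1) (hC : 0 ≤ C)
    (hcontr : ∀ y, ‖y‖ < r → ‖f^[N] y‖ ≤ K ^ N * ‖y‖)
    (hbound : ∀ y, ‖y‖ < r → ∀ s < N, ‖f^[s] y‖ ≤ C * ‖y‖) (m : ℕ) :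
    ∀ x, ‖x‖ < r → ‖f^[m] x‖ ≤ C / K ^ N * K ^ m * ‖x‖ := by
  induction m using Nat.strong_induction_on with
  | _ m ih =>
  intro x hx
  rcases lt_or_ge m N with hm | hm
  · have hKN : K ^ N ≤ K ^ m := pow_le_pow_of_le_one hK₀.le hK₁ hm.le
    calc ‖f^[m] x‖ ≤ C * ‖x‖ := hbound x hx m hm
      _ ≤ C / K ^ N * K ^ m * ‖x‖ := by
        gcongr
        rw [div_mul_eq_mul_div, le_div_iff₀ (by positivity)]
        gcongr
  · obtain ⟨s, rfl⟩ := Nat.exists_eq_add_of_le' hm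
    have hy : ‖f^[N] x‖ < r := by
      refine (hcontr x hx).trans_lt (lt_of_le_of_lt ?_ hx)
      exact mul_le_of_le_one_left (norm_nonneg x) (pow_le_one₀ hK₀.le hK₁)
    calc ‖f^[s + N] x‖ = ‖f^[s] (f^[N] x)‖ := by rw [Function.iterate_add_apply]
      _ ≤ C / K ^ N * K ^ s * ‖f^[N] x‖ := ih s (by omega) _ hy
      _ ≤ C / K ^ N * K ^ s * (K ^ N * ‖x‖) := by gcongr; exact hcontr x hx
      _ = C / K ^ N * K ^ (s + N) * ‖x‖ := by ring

section Differentiable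

variable {𝕜 E F : Type*} [NontriviallyNormedField 𝕜] [NormedAddCommGroup E] [NormedSpace 𝕜 E]
  [NormedAddCommGroup F] [NormedSpace 𝕜 F]

theorem HasFDerivAt.eventually_norm_le_mul_norm {g : E → F} {L : E →L[𝕜] F}
    (hg : HasFDerivAt g L 0) (h0 : g 0 = 0) {c : ℝ} (hc : ‖L‖ < c) :
    ∀ᶠ y in 𝓝 0, ‖g y‖ ≤ c * ‖y‖ := by
  filter_upwards [hg.isLittleO.def (sub_pos.2 hc)] with y hy
  simp only [h0, sub_zero] at hy
  calc ‖g y‖ ≤ ‖g y - L y‖ + ‖L y‖ := norm_le_norm_sub_add _ _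
    _ ≤ (c - ‖L‖) * ‖y‖ + ‖L‖ * ‖y‖ := add_le_add hy (L.le_opNorm y)
    _ = c * ‖y‖ := by ring

theorem HasFDerivAt.exists_eventually_norm_iterate_le {f : E → E} {f' : E →L[𝕜] E}
    (hf : HasFDerivAt f f' 0) (h0 : f 0 = 0) (N : ℕ) :
    ∃ C > 0, ∀ᶠ y in 𝓝 0, ∀ s < N, ‖f^[s] y‖ ≤ C * ‖y‖ := by
  have hsum : (fun y ↦ ∑ s ∈ Finset.range N, ‖f^[s] y‖) =O[𝓝 0] (fun y ↦ y) := by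
    refine Asymptotics.IsBigO.fun_sum fun s _ ↦ ?_
    simpa [Function.iterate_fixed h0] using (hf.iterate h0 s).isBigO_sub.norm_left
  obtain ⟨C, hC, hCw⟩ := hsum.exists_pos
  refine ⟨C, hC, hCw.bound.mono fun y hy s hs ↦ ?_⟩
  calc ‖f^[s] y‖ ≤ ∑ s ∈ Finset.range N, ‖f^[s] y‖ :=
        Finset.single_le_sum (f := fun s ↦ ‖f^[s] y‖) (fun _ _ ↦ norm_nonneg _)
          (Finset.mem_range.2 hs)
    _ ≤ ‖∑ s ∈ Finset.range N, ‖f^[s] y‖‖ := Real.le_norm_self _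
    _ ≤ C * ‖y‖ := hy

theorem HasFDerivAt.exists_norm_iterate_le_mul_pow {f : E → E} {f' : E →L[𝕜] E}
    (hf : HasFDerivAt f f' 0) (h0 : f 0 = 0) {N : ℕ} (hN : 0 < N) (hf'N : ‖f' ^ N‖ < 1) :
    ∃ V ∈ 𝓝 (0 : E), ∃ γ > (0 : ℝ), ∃ K ∈ Ioo (0 : ℝ) 1,
      ∀ x ∈ V, ∀ m : ℕ, ‖f^[m] x‖ ≤ γ * K ^ m := by
  obtain ⟨c, hf'c, hc₁⟩ := exists_between hf'N
  have hc₀ : 0 < c := (norm_nonneg _).trans_lt hf'c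
  set K := c ^ (N⁻¹ : ℝ)
  have hKN : K ^ N = c := Real.rpow_inv_natCast_pow hc₀.le hN.ne'
  have hK₀ : 0 < K := Real.rpow_pos_of_pos hc₀ _
  have hK₁ : K < 1 := Real.rpow_lt_one hc₀.le hc₁ (by positivity)
  have hcontr := (hf.iterate h0 N).eventually_norm_le_mul_norm (Function.iterate_fixed h0 N)
    (hKN ▸ hf'c)
  obtain ⟨C, hC, hbound⟩ := hf.exists_eventually_norm_iterate_le h0 N
  obtain ⟨r, hr, hball⟩ := Metric.eventually_nhds_iff.1 (hcontr.and hbound)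
  simp only [dist_zero_right] at hball
  refine ⟨ball 0 r, ball_mem_nhds 0 hr, C / K ^ N * r, by positivity, K, ⟨hK₀, hK₁⟩,
    fun x hx m ↦ ?_⟩
  calc ‖f^[m] x‖ ≤ C / K ^ N * K ^ m * ‖x‖ :=
        norm_iterate_le_of_norm_iterate_le_pow hN hK₀ hK₁.le hC.le
          (fun _ hy ↦ (hball hy).1) (fun _ hy ↦ (hball hy).2) m x (mem_ball_zero_iff.1 hx)
    _ ≤ C / K ^ N * r * K ^ m := by
        rw [mul_right_comm]
        gcongr
        exact (mem_ball_zero_iff.1 hx).le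

end Differentiable

theorem stmt1 {n : ℕ} (F : EuclideanSpace ℝ (Fin n) → EuclideanSpace ℝ (Fin n))
    (hF : ContDiff ℝ 1 F) (h0 : F 0 = 0)
    (heig : ∀ μ ∈ specC (fderiv ℝ F 0).toLinearMap, ‖μ‖ < 1) :
    ∃ V ∈ nhds (0 : EuclideanSpace ℝ (Fin n)), ∃ γ > (0:ℝ), ∃ K ∈ Set.Ioo (0:ℝ) 1,
      ∀ x ∈ V, ∀ m : ℕ, ‖F^[m] x‖ ≤ γ * K ^ m := by
  have hA : HasFDerivAt F (fderiv ℝ F 0) 0 := (hF.differentiable one_ne_zero 0).hasFDerivAt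
  obtain ⟨N, hAN, hN⟩ :=
    (((ContinuousLinearMap.tendsto_pow_atTop_nhds_zero_of_forall_specC_norm_lt_one heig).eventually
      (ball_mem_nhds 0 one_pos)).and (eventually_gt_atTop 0)).exists
  exact hA.exists_norm_iterate_le_mul_pow h0 hN (mem_ball_zero_iff.1 hAN)
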